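/- Let dS, dE ≥ 1 and let μ be the uniform probability measure on the unit sphere of ℂ^{dS·dE}, with vectors indexed by the product type Fin dS × Fin dE. For a unit vector ψ, let ρ_S^ψ be its reduced density matrix, ρ_S^ψ(s,s′) = Σ_{e} ψ(s,e)·conj(ψ(s′,e)). Then the mean squared Hilbert–Schmidt (Frobenius) distance of ρ_S^ψ from the reduced state of the normalized projection, ρ_S^{W_R} = (1/dS) • 1, satisfies ∫ ‖ρ_S^ψ − (1/dS) • 1‖_F² dμ(ψ) = (dS² − 1)/(dS·(dS·dE + 1)). (Quantitative canonical typicality: for a large environment the reduced state of a typical pure universal state is close to the reduced state of the mixed universal state W_R.) -/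

import Mathlib

open Matrix MeasureTheory

set_option linter.unusedSectionVars false
set_option linter.unnecessarySeqFocus false
set_option linter.unreachableTactic false
set_option linter.unusedTactic false
set_option linter.unusedVariables false
set_option maxHeartbeats 1000000

noncomputable instance {ι : Type*} : MeasurableSpace (EuclideanSpace ℂ ι) := borel _

instance {ι : Type*} : BorelSpace (EuclideanSpace ℂ ι) := ⟨rfl⟩

/-- The reduced density matrix of the pure state `|ψ⟩⟨ψ|`: the partial trace over the
environment, `ρ_S^ψ(s,s′) = Σ_e ψ(s,e)·conj(ψ(s′,e))`. -/
noncomputable def reducedState {dS dE : ℕ}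
    (ψ : EuclideanSpace ℂ (Fin dS × Fin dE)) : Matrix (Fin dS) (Fin dS) ℂ :=
  Matrix.of fun s s' => ∑ e : Fin dE, ψ (s, e) * star (ψ (s', e))

/-- The squared Frobenius (Hilbert–Schmidt) norm `‖A‖_F² = Σ_{s,s′} |A(s,s′)|²`. -/
noncomputable def frobSq {dS : ℕ} (A : Matrix (Fin dS) (Fin dS) ℂ) : ℝ :=
  ∑ s : Fin dS, ∑ s' : Fin dS, Complex.normSq (A s s')

/-- `μ` is the uniform probability measure on the unit sphere of `ℂ^ι`: a Borel
probability measure invariant under every unitary rotation of `ℂ^ι`. (The normalized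
rotation-invariant surface measure is the unique such measure.) -/
def IsUniformSphereMeasure {ι : Type*} [Fintype ι] [DecidableEq ι]
    (μ : Measure (Metric.sphere (0 : EuclideanSpace ℂ ι) 1)) : Prop :=
  IsProbabilityMeasure μ ∧
    ∀ U : Matrix ι ι ℂ, U ∈ Matrix.unitaryGroup ι ℂ →
      Measure.map
        (fun ψ : EuclideanSpace ℂ ι =>
          (WithLp.equiv 2 (ι → ℂ)).symm (U.mulVec ((WithLp.equiv 2 (ι → ℂ)) ψ)))
        (Measure.map Subtype.val μ) = Measure.map Subtype.val μ

namespace CanTyp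
variable {ι : Type*} [Fintype ι] [DecidableEq ι]

/-! ### basic objects -/

noncomputable def rot (U : Matrix ι ι ℂ) (ψ : EuclideanSpace ℂ ι) : EuclideanSpace ℂ ι :=
  (WithLp.equiv 2 (ι → ℂ)).symm (U.mulVec ((WithLp.equiv 2 (ι → ℂ)) ψ))

lemma rot_apply (U : Matrix ι ι ℂ) (ψ : EuclideanSpace ℂ ι) (x : ι) :
    rot U ψ x = U.mulVec (fun y => ψ y) x := rfl

lemma continuous_rot (U : Matrix ι ι ℂ) : Continuous (rot U) := by
  refine (PiLp.continuous_toLp 2 (fun _ : ι => ℂ)).comp ?_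
  exact (U.mulVecLin.continuous_of_finiteDimensional).comp (PiLp.continuous_ofLp 2 _)

noncomputable def P (i j k l : ι) (ψ : EuclideanSpace ℂ ι) : ℂ :=
  ψ i * (starRingEnd ℂ) (ψ j) * (ψ k * (starRingEnd ℂ) (ψ l))

lemma continuous_P (i j k l : ι) : Continuous (P i j k l) := by
  have h : ∀ m : ι, Continuous fun ψ : EuclideanSpace ℂ ι => ψ m := fun m =>
    (continuous_apply m).comp (PiLp.continuous_ofLp 2 _)
  exact ((h i).mul ((Complex.continuous_conj).comp (h j))).mul
    ((h k).mul ((Complex.continuous_conj).comp (h l)))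

variable {μ : Measure (Metric.sphere (0 : EuclideanSpace ℂ ι) 1)}

lemma integrable_cont [IsProbabilityMeasure μ] {G : Type*} [NormedAddCommGroup G]
    (f : Metric.sphere (0 : EuclideanSpace ℂ ι) 1 → G) (hf : Continuous f) :
    Integrable f μ :=
  hf.integrable_of_hasCompactSupport (HasCompactSupport.of_compactSpace f)

noncomputable def Mom (μ : Measure (Metric.sphere (0 : EuclideanSpace ℂ ι) 1))
    (i j k l : ι) : ℂ :=
  ∫ ψ : Metric.sphere (0 : EuclideanSpace ℂ ι) 1, P i j k l ψ.val ∂μ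

lemma integrable_P [IsProbabilityMeasure μ] (i j k l : ι) :
    Integrable (fun ψ : Metric.sphere (0 : EuclideanSpace ℂ ι) 1 => P i j k l ψ.val) μ :=
  integrable_cont _ ((continuous_P i j k l).comp continuous_subtype_val)

lemma integral_rot_inv (hμ : IsUniformSphereMeasure μ) {U : Matrix ι ι ℂ}
    (hU : U ∈ Matrix.unitaryGroup ι ℂ) (f : EuclideanSpace ℂ ι → ℂ) (hf : Continuous f) :
    ∫ ψ : Metric.sphere (0 : EuclideanSpace ℂ ι) 1, f (rot U ψ.val) ∂μ
      = ∫ ψ : Metric.sphere (0 : EuclideanSpace ℂ ι) 1, f ψ.val ∂μ := by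
  have hmap : Measure.map (rot U) (Measure.map Subtype.val μ) = Measure.map Subtype.val μ :=
    hμ.2 U hU
  have h1 : ∫ ψ : Metric.sphere (0 : EuclideanSpace ℂ ι) 1, f (rot U ψ.val) ∂μ
      = ∫ x, f (rot U x) ∂(Measure.map Subtype.val μ) :=
    (integral_map measurable_subtype_coe.aemeasurable
      ((hf.comp (continuous_rot U)).aestronglyMeasurable)).symm
  have h2 : ∫ x, f (rot U x) ∂(Measure.map Subtype.val μ)
      = ∫ x, f x ∂(Measure.map (rot U) (Measure.map Subtype.val μ)) :=
    (integral_map (continuous_rot U).aemeasurable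
      (by rw [hmap]; exact hf.aestronglyMeasurable)).symm
  rw [h1, h2, hmap,
    integral_map measurable_subtype_coe.aemeasurable hf.aestronglyMeasurable]

/-! ### diagonal phase unitaries and the vanishing lemma -/

noncomputable def Dmat (a : ι) : Matrix ι ι ℂ :=
  Matrix.diagonal (fun x => if x = a then Complex.I else 1)

lemma Dmat_mem (a : ι) : Dmat a ∈ Matrix.unitaryGroup ι ℂ := by
  rw [Matrix.mem_unitaryGroup_iff]
  rw [show star (Dmat a) = (Dmat a)ᴴ from rfl, Dmat, Matrix.diagonal_conjTranspose,
    Matrix.diagonal_mul_diagonal, ← Matrix.diagonal_one]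
  refine congrArg Matrix.diagonal (funext fun x => ?_)
  by_cases h : x = a <;>
    simp [h, Pi.star_apply, Complex.star_def, Complex.conj_I, Complex.I_mul_I]

lemma I_pow_ne (p q : ℕ) (hp : p ≤ 2) (hq : q ≤ 2) (hpq : p ≠ q) :
    Complex.I ^ p * (-Complex.I) ^ q ≠ 1 := by
  interval_cases p <;> interval_cases q <;>
    simp_all [pow_succ, Complex.ext_iff, Complex.I_mul_I] <;> norm_num

lemma rot_Dmat_apply (a : ι) (ψ : EuclideanSpace ℂ ι) (x : ι) :
    rot (Dmat a) ψ x = (if x = a then Complex.I else 1) * ψ x := by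
  rw [rot_apply, Dmat, Matrix.mulVec_diagonal]

lemma P_rot_Dmat (a i j k l : ι) (ψ : EuclideanSpace ℂ ι) :
    P i j k l (rot (Dmat a) ψ)
      = Complex.I ^ ((if i = a then 1 else 0) + (if k = a then 1 else 0)) *
        (-Complex.I) ^ ((if j = a then 1 else 0) + (if l = a then 1 else 0)) *
        P i j k l ψ := by
  have hconj : ∀ x : ι, (starRingEnd ℂ) ((if x = a then Complex.I else 1) * ψ x)
      = (if x = a then -Complex.I else 1) * (starRingEnd ℂ) (ψ x) := by
    intro x
    rw [_root_.map_mul]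
    congr 1
    split_ifs <;> simp [Complex.conj_I]
  simp only [P, rot_Dmat_apply, hconj]
  split_ifs <;> ring_nf

lemma Mom_vanish (hμ : IsUniformSphereMeasure μ) {i j k l : ι} (a : ι)
    (h : ((if i = a then 1 else 0) + (if k = a then 1 else 0) : ℕ)
       ≠ ((if j = a then 1 else 0) + (if l = a then 1 else 0) : ℕ)) :
    Mom μ i j k l = 0 := by
  haveI : IsProbabilityMeasure μ := hμ.1
  set p : ℕ := (if i = a then 1 else 0) + (if k = a then 1 else 0) with hp
  set q : ℕ := (if j = a then 1 else 0) + (if l = a then 1 else 0) with hq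
  have h1 := integral_rot_inv hμ (Dmat_mem a) (P i j k l) (continuous_P i j k l)
  have h2 : ∫ ψ : Metric.sphere (0 : EuclideanSpace ℂ ι) 1, P i j k l (rot (Dmat a) ψ.val) ∂μ
      = (Complex.I ^ p * (-Complex.I) ^ q) * Mom μ i j k l := by
    simp_rw [P_rot_Dmat a i j k l]
    exact integral_const_mul _ _
  have h3 : (Complex.I ^ p * (-Complex.I) ^ q) * Mom μ i j k l = Mom μ i j k l := by
    rw [← h2, h1]; rfl
  have hne : Complex.I ^ p * (-Complex.I) ^ q ≠ 1 :=
    I_pow_ne p q (by rw [hp]; split_ifs <;> norm_num)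
      (by rw [hq]; split_ifs <;> norm_num) h
  have h4 : (Complex.I ^ p * (-Complex.I) ^ q - 1) * Mom μ i j k l = 0 := by
    rw [sub_mul, h3, one_mul, sub_self]
  rcases mul_eq_zero.mp h4 with h5 | h5
  · exact (hne (sub_eq_zero.mp h5)).elim
  · exact h5

/-! ### the rotation unitary -/

noncomputable def r : ℂ := (2⁻¹ : ℂ) + (2⁻¹ : ℂ) * Complex.I

lemma r_mul_star : r * (starRingEnd ℂ) r = 2⁻¹ := by
  rw [Complex.mul_conj]
  norm_num [r, Complex.normSq_apply]

lemma sum_two {M : Type*} [AddCommMonoid M] {a b : ι} (hab : a ≠ b) (u v : M) :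
    ∑ y : ι, (if y = a then u else if y = b then v else 0) = u + v := by
  have h : ∀ y : ι, (if y = a then u else if y = b then v else 0)
      = (if y = a then u else 0) + (if y = b then v else 0) := by
    intro y
    split_ifs with h1 h2 <;> simp_all
  simp_rw [h]
  rw [Finset.sum_add_distrib, Finset.sum_ite_eq' Finset.univ a (fun _ => u),
    Finset.sum_ite_eq' Finset.univ b (fun _ => v)]
  simp

lemma sum_one {M : Type*} [AddCommMonoid M] (c : ι) (f : ι → M) :
    ∑ y : ι, (if y = c then f y else 0) = f c := by
  rw [Finset.sum_ite_eq' Finset.univ c f]; simp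

noncomputable def Rmat (a b : ι) : Matrix ι ι ℂ := Matrix.of fun x y =>
  if x = a then (if y = a then r else if y = b then r else 0)
  else if x = b then (if y = a then r else if y = b then -r else 0)
  else if y = x then 1 else 0

lemma Rmat_apply_a (a b y : ι) :
    Rmat a b a y = (if y = a then r else if y = b then r else 0) := by simp [Rmat]

lemma Rmat_apply_b {a b : ι} (hab : a ≠ b) (y : ι) :
    Rmat a b b y = (if y = a then r else if y = b then -r else 0) := by
  simp [Rmat, hab.symm]

lemma Rmat_apply_other {a b x : ι} (hx : x ≠ a) (hx' : x ≠ b) (y : ι) :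
    Rmat a b x y = if y = x then 1 else 0 := by simp [Rmat, hx, hx']

lemma Rmat_mem {a b : ι} (hab : a ≠ b) : Rmat a b ∈ Matrix.unitaryGroup ι ℂ := by
  have hs : (star r : ℂ) = (starRingEnd ℂ) r := rfl
  rw [Matrix.mem_unitaryGroup_iff]
  ext x z
  rw [Matrix.mul_apply, Matrix.one_apply]
  simp only [Matrix.star_apply]
  by_cases hx : x = a
  · rw [hx]
    by_cases hz : z = a
    · rw [hz, if_pos rfl,
        Finset.sum_congr rfl (fun y _ => show Rmat a b a y * star (Rmat a b a y)
          = if y = a then r * star r else if y = b then r * star r else 0 by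
            rw [Rmat_apply_a]; split_ifs <;> simp),
        sum_two hab]
      simp only [hs, r_mul_star]
      norm_num
    · by_cases hz' : z = b
      · rw [hz', if_neg hab,
          Finset.sum_congr rfl (fun y _ => show Rmat a b a y * star (Rmat a b b y)
            = if y = a then r * star r else if y = b then r * star (-r) else 0 by
              rw [Rmat_apply_a, Rmat_apply_b hab]; split_ifs <;> simp),
          sum_two hab]
        simp only [star_neg, mul_neg, hs, r_mul_star]
        ring
      · rw [if_neg (fun h : a = z => hz h.symm),
          Finset.sum_eq_zero (fun y _ => show Rmat a b a y * star (Rmat a b z y) = 0 by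
            rw [Rmat_apply_a, Rmat_apply_other hz hz']
            split_ifs <;> simp_all)]
  · by_cases hx' : x = b
    · rw [hx']
      by_cases hz : z = a
      · rw [hz, if_neg hab.symm,
          Finset.sum_congr rfl (fun y _ => show Rmat a b b y * star (Rmat a b a y)
            = if y = a then r * star r else if y = b then (-r) * star r else 0 by
              rw [Rmat_apply_a, Rmat_apply_b hab]; split_ifs <;> simp),
          sum_two hab]
        simp only [neg_mul, hs, r_mul_star]
        ring
      · by_cases hz' : z = b
        · rw [hz', if_pos rfl,
            Finset.sum_congr rfl (fun y _ => show Rmat a b b y * star (Rmat a b b y)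
              = if y = a then r * star r else if y = b then (-r) * star (-r) else 0 by
                rw [Rmat_apply_b hab]; split_ifs <;> simp),
            sum_two hab]
          simp only [star_neg, neg_mul, mul_neg, neg_neg, hs, r_mul_star]
          norm_num
        · rw [if_neg (fun h : b = z => hz' h.symm),
            Finset.sum_eq_zero (fun y _ => show Rmat a b b y * star (Rmat a b z y) = 0 by
              rw [Rmat_apply_b hab, Rmat_apply_other hz hz']
              split_ifs <;> simp_all)]
    · rw [Finset.sum_congr rfl (fun y _ => show Rmat a b x y * star (Rmat a b z y)
          = if y = x then star (Rmat a b z y) else 0 by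
            rw [Rmat_apply_other hx hx']; split_ifs <;> simp),
        sum_one x (fun y => star (Rmat a b z y))]
      by_cases hz : z = a
      · rw [hz, if_neg hx, Rmat_apply_a]
        split_ifs <;> simp_all
      · by_cases hz' : z = b
        · rw [hz', if_neg hx', Rmat_apply_b hab]
          split_ifs <;> simp_all
        · rw [Rmat_apply_other hz hz']
          split_ifs with h1 h2 <;> simp_all

lemma mulVec_Rmat_apply {a b : ι} (hab : a ≠ b) (ψ : ι → ℂ) (x : ι) :
    (Rmat a b).mulVec ψ x
      = if x = a then r * ψ a + r * ψ b else if x = b then r * ψ a + (-r) * ψ b else ψ x := by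
  rw [Matrix.mulVec, dotProduct]
  by_cases hx : x = a
  · rw [hx, if_pos rfl,
      Finset.sum_congr rfl (fun y _ => show Rmat a b a y * ψ y
        = if y = a then r * ψ a else if y = b then r * ψ b else 0 by
          rw [Rmat_apply_a]; split_ifs <;> simp_all),
      sum_two hab]
  · by_cases hx' : x = b
    · rw [hx', if_neg hab.symm, if_pos rfl,
        Finset.sum_congr rfl (fun y _ => show Rmat a b b y * ψ y
          = if y = a then r * ψ a else if y = b then (-r) * ψ b else 0 by
            rw [Rmat_apply_b hab]; split_ifs <;> simp_all),
        sum_two hab]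
    · rw [if_neg hx, if_neg hx',
        Finset.sum_congr rfl (fun y _ => show Rmat a b x y * ψ y
          = if y = x then ψ y else 0 by
            rw [Rmat_apply_other hx hx']; split_ifs <;> simp),
        sum_one x ψ]

lemma rot_Rmat_a {a b : ι} (hab : a ≠ b) (ψ : EuclideanSpace ℂ ι) :
    rot (Rmat a b) ψ a = r * ψ a + r * ψ b := by
  rw [rot_apply, mulVec_Rmat_apply hab]; simp

lemma rot_Rmat_b {a b : ι} (hab : a ≠ b) (ψ : EuclideanSpace ℂ ι) :
    rot (Rmat a b) ψ b = r * ψ a + (-r) * ψ b := by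
  rw [rot_apply, mulVec_Rmat_apply hab]; simp [hab.symm]


lemma integral_lin4 {X : Type*} [MeasurableSpace X] {ν : Measure X} (c1 c2 c3 c4 : ℂ)
    {f1 f2 f3 f4 : X → ℂ} (h1 : Integrable f1 ν) (h2 : Integrable f2 ν)
    (h3 : Integrable f3 ν) (h4 : Integrable f4 ν) :
    ∫ x, (c1 * f1 x + c2 * f2 x + c3 * f3 x + c4 * f4 x) ∂ν
      = c1 * ∫ x, f1 x ∂ν + c2 * ∫ x, f2 x ∂ν + c3 * ∫ x, f3 x ∂ν + c4 * ∫ x, f4 x ∂ν := by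
  have i1 : Integrable (fun x => c1 * f1 x) ν := h1.const_mul _
  have i2 : Integrable (fun x => c2 * f2 x) ν := h2.const_mul _
  have i3 : Integrable (fun x => c3 * f3 x) ν := h3.const_mul _
  have i4 : Integrable (fun x => c4 * f4 x) ν := h4.const_mul _
  have i12 : Integrable (fun x => c1 * f1 x + c2 * f2 x) ν := i1.add i2
  have i123 : Integrable (fun x => c1 * f1 x + c2 * f2 x + c3 * f3 x) ν := i12.add i3
  calc ∫ x, (c1 * f1 x + c2 * f2 x + c3 * f3 x + c4 * f4 x) ∂ν
      = (∫ x, (c1 * f1 x + c2 * f2 x + c3 * f3 x) ∂ν) + ∫ x, c4 * f4 x ∂ν :=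
        integral_add i123 i4
    _ = (∫ x, (c1 * f1 x + c2 * f2 x) ∂ν) + (∫ x, c3 * f3 x ∂ν) + ∫ x, c4 * f4 x ∂ν := by
        rw [integral_add i12 i3]
    _ = (∫ x, c1 * f1 x ∂ν) + (∫ x, c2 * f2 x ∂ν) + (∫ x, c3 * f3 x ∂ν)
          + ∫ x, c4 * f4 x ∂ν := by rw [integral_add i1 i2]
    _ = _ := by rw [integral_const_mul, integral_const_mul, integral_const_mul, integral_const_mul]

lemma integral_lin6 {X : Type*} [MeasurableSpace X] {ν : Measure X} (c1 c2 c3 c4 c5 c6 : ℂ)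
    {f1 f2 f3 f4 f5 f6 : X → ℂ} (h1 : Integrable f1 ν) (h2 : Integrable f2 ν)
    (h3 : Integrable f3 ν) (h4 : Integrable f4 ν) (h5 : Integrable f5 ν) (h6 : Integrable f6 ν) :
    ∫ x, (c1 * f1 x + c2 * f2 x + c3 * f3 x + c4 * f4 x + c5 * f5 x + c6 * f6 x) ∂ν
      = c1 * ∫ x, f1 x ∂ν + c2 * ∫ x, f2 x ∂ν + c3 * ∫ x, f3 x ∂ν + c4 * ∫ x, f4 x ∂ν
        + c5 * ∫ x, f5 x ∂ν + c6 * ∫ x, f6 x ∂ν := by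
  have i1 : Integrable (fun x => c1 * f1 x) ν := h1.const_mul _
  have i2 : Integrable (fun x => c2 * f2 x) ν := h2.const_mul _
  have i3 : Integrable (fun x => c3 * f3 x) ν := h3.const_mul _
  have i4 : Integrable (fun x => c4 * f4 x) ν := h4.const_mul _
  have i5 : Integrable (fun x => c5 * f5 x) ν := h5.const_mul _
  have i6 : Integrable (fun x => c6 * f6 x) ν := h6.const_mul _
  have i12 : Integrable (fun x => c1 * f1 x + c2 * f2 x) ν := i1.add i2
  have i123 : Integrable (fun x => c1 * f1 x + c2 * f2 x + c3 * f3 x) ν := i12.add i3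
  have i1234 : Integrable (fun x => c1 * f1 x + c2 * f2 x + c3 * f3 x + c4 * f4 x) ν :=
    i123.add i4
  have i12345 : Integrable
      (fun x => c1 * f1 x + c2 * f2 x + c3 * f3 x + c4 * f4 x + c5 * f5 x) ν := i1234.add i5
  calc ∫ x, (c1 * f1 x + c2 * f2 x + c3 * f3 x + c4 * f4 x + c5 * f5 x + c6 * f6 x) ∂ν
      = (∫ x, (c1 * f1 x + c2 * f2 x + c3 * f3 x + c4 * f4 x + c5 * f5 x) ∂ν)
          + ∫ x, c6 * f6 x ∂ν := integral_add i12345 i6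
    _ = (∫ x, (c1 * f1 x + c2 * f2 x + c3 * f3 x + c4 * f4 x) ∂ν) + (∫ x, c5 * f5 x ∂ν)
          + ∫ x, c6 * f6 x ∂ν := by rw [integral_add i1234 i5]
    _ = (∫ x, (c1 * f1 x + c2 * f2 x + c3 * f3 x) ∂ν) + (∫ x, c4 * f4 x ∂ν)
          + (∫ x, c5 * f5 x ∂ν) + ∫ x, c6 * f6 x ∂ν := by rw [integral_add i123 i4]
    _ = (∫ x, (c1 * f1 x + c2 * f2 x) ∂ν) + (∫ x, c3 * f3 x ∂ν) + (∫ x, c4 * f4 x ∂ν)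
          + (∫ x, c5 * f5 x ∂ν) + ∫ x, c6 * f6 x ∂ν := by rw [integral_add i12 i3]
    _ = (∫ x, c1 * f1 x ∂ν) + (∫ x, c2 * f2 x ∂ν) + (∫ x, c3 * f3 x ∂ν)
          + (∫ x, c4 * f4 x ∂ν) + (∫ x, c5 * f5 x ∂ν) + ∫ x, c6 * f6 x ∂ν := by
        rw [integral_add i1 i2]
    _ = _ := by rw [integral_const_mul, integral_const_mul, integral_const_mul, integral_const_mul,
          integral_const_mul, integral_const_mul]

/-! ### moment identities from the rotation -/

lemma P_abba_rot {a b : ι} (hab : a ≠ b) (ψ : EuclideanSpace ℂ ι) :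
    P a b b a (rot (Rmat a b) ψ)
      = (r * (starRingEnd ℂ) r) * (r * (starRingEnd ℂ) r) *
        (1 * P a a a a ψ + (-1) * P a b a b ψ + (-1) * P b a b a ψ + 1 * P b b b b ψ) := by
  simp only [P, rot_Rmat_a hab, rot_Rmat_b hab, map_add, _root_.map_mul, map_neg]
  ring

lemma P_aaab_rot {a b : ι} (hab : a ≠ b) (ψ : EuclideanSpace ℂ ι) :
    P a a a b (rot (Rmat a b) ψ)
      = (r * (starRingEnd ℂ) r) * (r * (starRingEnd ℂ) r) *
        (1 * P a a a a ψ + (-1) * P a b a b ψ + 2 * P a a b a ψ + (-2) * P a b b b ψ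
          + 1 * P b a b a ψ + (-1) * P b b b b ψ) := by
  simp only [P, rot_Rmat_a hab, rot_Rmat_b hab, map_add, _root_.map_mul, map_neg]
  ring

lemma Mom_diag_eq (hμ : IsUniformSphereMeasure μ) {a b : ι} (hab : a ≠ b) :
    Mom μ a a a a = Mom μ b b b b := by
  haveI : IsProbabilityMeasure μ := hμ.1
  have v1 : Mom μ a a a b = 0 := Mom_vanish hμ b (by simp [hab])
  have v2 : Mom μ a b a b = 0 := Mom_vanish hμ a (by simp [hab.symm])
  have v3 : Mom μ a a b a = 0 := Mom_vanish hμ b (by simp [hab])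
  have v4 : Mom μ a b b b = 0 := Mom_vanish hμ a (by simp [hab.symm])
  have v5 : Mom μ b a b a = 0 := Mom_vanish hμ a (by simp [hab.symm])
  have h1 := integral_rot_inv hμ (Rmat_mem hab) (P a a a b) (continuous_P a a a b)
  have h2 : ∫ ψ : Metric.sphere (0 : EuclideanSpace ℂ ι) 1,
        P a a a b (rot (Rmat a b) ψ.val) ∂μ
      = (r * (starRingEnd ℂ) r) * (r * (starRingEnd ℂ) r) *
        (1 * Mom μ a a a a + (-1) * Mom μ a b a b + 2 * Mom μ a a b a + (-2) * Mom μ a b b b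
          + 1 * Mom μ b a b a + (-1) * Mom μ b b b b) := by
    simp_rw [P_aaab_rot hab]
    rw [integral_const_mul]
    congr 1
    exact integral_lin6 1 (-1) 2 (-2) 1 (-1)
      (integrable_P a a a a) (integrable_P a b a b) (integrable_P a a b a)
      (integrable_P a b b b) (integrable_P b a b a) (integrable_P b b b b)
  have h3 : (0 : ℂ) = (2⁻¹ : ℂ) * 2⁻¹ * (Mom μ a a a a - Mom μ b b b b) := by
    have : Mom μ a a a b = ∫ ψ : Metric.sphere (0 : EuclideanSpace ℂ ι) 1,
        P a a a b ψ.val ∂μ := rfl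
    rw [← v1, this, ← h1, h2, v2, v3, v4, v5, r_mul_star]
    ring
  have h4 := h3.symm
  rw [mul_eq_zero] at h4
  rcases h4 with h | h
  · norm_num at h
  · exact sub_eq_zero.mp h

lemma Mom_abba (hμ : IsUniformSphereMeasure μ) {a b : ι} (hab : a ≠ b) :
    Mom μ a b b a = 2⁻¹ * Mom μ a a a a := by
  haveI : IsProbabilityMeasure μ := hμ.1
  have v2 : Mom μ a b a b = 0 := Mom_vanish hμ a (by simp [hab.symm])
  have v5 : Mom μ b a b a = 0 := Mom_vanish hμ a (by simp [hab.symm])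
  have h1 := integral_rot_inv hμ (Rmat_mem hab) (P a b b a) (continuous_P a b b a)
  have h2 : ∫ ψ : Metric.sphere (0 : EuclideanSpace ℂ ι) 1,
        P a b b a (rot (Rmat a b) ψ.val) ∂μ
      = (r * (starRingEnd ℂ) r) * (r * (starRingEnd ℂ) r) *
        (1 * Mom μ a a a a + (-1) * Mom μ a b a b + (-1) * Mom μ b a b a
          + 1 * Mom μ b b b b) := by
    simp_rw [P_abba_rot hab]
    rw [integral_const_mul]
    congr 1
    exact integral_lin4 1 (-1) (-1) 1
      (integrable_P a a a a) (integrable_P a b a b) (integrable_P b a b a)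
      (integrable_P b b b b)
  have h3 : Mom μ a b b a = ∫ ψ : Metric.sphere (0 : EuclideanSpace ℂ ι) 1,
      P a b b a ψ.val ∂μ := rfl
  rw [h3, ← h1, h2, v2, v5, r_mul_star, ← Mom_diag_eq hμ hab]
  ring

lemma Mom_iijj_comm (i j : ι) : Mom μ i j j i = Mom μ i i j j := by
  unfold Mom P
  congr 1
  funext ψ
  ring

lemma norm_sum_eq_one (ψ : Metric.sphere (0 : EuclideanSpace ℂ ι) 1) :
    ∑ i, (ψ.val i * (starRingEnd ℂ) (ψ.val i)) = 1 := by
  have h1 : ‖(ψ.val : EuclideanSpace ℂ ι)‖ = 1 := mem_sphere_zero_iff_norm.mp ψ.2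
  rw [EuclideanSpace.norm_eq] at h1
  have h2 : ∑ i, ‖ψ.val i‖ ^ 2 = 1 := Real.sqrt_eq_one.mp h1
  calc ∑ i, (ψ.val i * (starRingEnd ℂ) (ψ.val i))
      = ∑ i, ((‖ψ.val i‖ ^ 2 : ℝ) : ℂ) := by
        refine Finset.sum_congr rfl fun i _ => ?_
        rw [Complex.mul_conj]
        norm_cast
        rw [Complex.normSq_eq_norm_sq]
    _ = ((∑ i, ‖ψ.val i‖ ^ 2 : ℝ) : ℂ) := by push_cast; ring
    _ = 1 := by rw [h2]; norm_num

lemma sum_Mom_eq_one (hμ : IsUniformSphereMeasure μ) :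
    ∑ p : ι × ι, Mom μ p.1 p.1 p.2 p.2 = 1 := by
  haveI : IsProbabilityMeasure μ := hμ.1
  have h1 : ∑ p : ι × ι, Mom μ p.1 p.1 p.2 p.2
      = ∫ ψ : Metric.sphere (0 : EuclideanSpace ℂ ι) 1,
          (∑ p : ι × ι, P p.1 p.1 p.2 p.2 ψ.val) ∂μ :=
    (integral_finset_sum _ (fun p _ => integrable_P p.1 p.1 p.2 p.2)).symm
  have h2 : ∀ ψ : Metric.sphere (0 : EuclideanSpace ℂ ι) 1,
      ∑ p : ι × ι, P p.1 p.1 p.2 p.2 ψ.val = 1 := by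
    intro ψ
    calc ∑ p : ι × ι, P p.1 p.1 p.2 p.2 ψ.val
        = ∑ i : ι, ∑ j : ι, (ψ.val i * (starRingEnd ℂ) (ψ.val i))
            * (ψ.val j * (starRingEnd ℂ) (ψ.val j)) := by
          rw [Fintype.sum_prod_type]
          exact Finset.sum_congr rfl fun i _ => Finset.sum_congr rfl fun j _ => by
            simp [P]
      _ = (∑ i, (ψ.val i * (starRingEnd ℂ) (ψ.val i)))
            * (∑ j, (ψ.val j * (starRingEnd ℂ) (ψ.val j))) := by
          rw [Finset.sum_mul_sum]
      _ = 1 := by rw [norm_sum_eq_one ψ]; norm_num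
  simp_rw [h2] at h1
  rw [h1]
  simp

lemma Mom_diag_value (hμ : IsUniformSphereMeasure μ) {a b : ι} (hab : a ≠ b) :
    Mom μ a a a a = 2 / ((Fintype.card ι : ℂ) * ((Fintype.card ι : ℂ) + 1)) := by
  haveI : IsProbabilityMeasure μ := hμ.1
  set c := Mom μ a a a a with hc
  have hdiag : ∀ i : ι, Mom μ i i i i = c := by
    intro i
    by_cases hia : i = a
    · rw [hia]
    · exact Mom_diag_eq hμ hia
  have hoff : ∀ i j : ι, i ≠ j → Mom μ i i j j = 2⁻¹ * c := by
    intro i j hij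
    rw [← Mom_iijj_comm, Mom_abba hμ hij, hdiag i]
  have hsum := sum_Mom_eq_one hμ
  have h1 : ∀ p : ι × ι, Mom μ p.1 p.1 p.2 p.2
      = 2⁻¹ * c + (if p.1 = p.2 then 2⁻¹ * c else 0) := by
    intro p
    by_cases hp : p.1 = p.2
    · rw [hp, if_pos rfl, hdiag p.2]; ring
    · rw [if_neg hp, hoff p.1 p.2 hp]; ring
  rw [Finset.sum_congr rfl (fun p _ => h1 p), Finset.sum_add_distrib,
    Finset.sum_const] at hsum
  have h2 : ∑ p : ι × ι, (if p.1 = p.2 then (2⁻¹ : ℂ) * c else 0)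
      = (Fintype.card ι : ℂ) * (2⁻¹ * c) := by
    rw [Fintype.sum_prod_type]
    have : ∀ i : ι, ∑ j : ι, (if i = j then (2⁻¹ : ℂ) * c else 0) = 2⁻¹ * c := by
      intro i
      rw [Finset.sum_ite_eq Finset.univ i (fun _ => (2⁻¹ : ℂ) * c)]
      simp
    rw [Finset.sum_congr rfl (fun i _ => this i), Finset.sum_const]
    simp [mul_comm]
  rw [h2, Finset.card_univ, Fintype.card_prod] at hsum
  have hn : (0 : ℕ) < Fintype.card ι := Fintype.card_pos_iff.mpr ⟨a⟩
  have hne : (Fintype.card ι : ℂ) ≠ 0 := by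
    exact_mod_cast Nat.cast_ne_zero.mpr hn.ne'
  have hne1 : (Fintype.card ι : ℂ) + 1 ≠ 0 := by
    intro h
    have : ((Fintype.card ι + 1 : ℕ) : ℂ) = 0 := by push_cast; linear_combination h
    exact_mod_cast Nat.cast_ne_zero.mpr (Nat.succ_ne_zero _) this
  field_simp
  rw [nsmul_eq_mul] at hsum
  push_cast at hsum ⊢
  linear_combination (2 : ℂ) * hsum



-- Step B pointwise
lemma normSq_entry_eq (dS dE : ℕ) (ψ : EuclideanSpace ℂ (Fin dS × Fin dE)) (s s' : Fin dS) :
    Complex.normSq (reducedState ψ s s')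
      = (∑ q : Fin dE × Fin dE, P (s, q.1) (s', q.1) (s', q.2) (s, q.2) ψ).re := by
  have hz : reducedState ψ s s' * (starRingEnd ℂ) (reducedState ψ s s')
      = ∑ q : Fin dE × Fin dE, P (s, q.1) (s', q.1) (s', q.2) (s, q.2) ψ := by
    rw [Fintype.sum_prod_type]
    have h1 : reducedState ψ s s' = ∑ e : Fin dE, ψ (s, e) * star (ψ (s', e)) := rfl
    rw [h1, map_sum, Finset.sum_mul_sum]
    refine Finset.sum_congr rfl fun e _ => Finset.sum_congr rfl fun e' _ => ?_
    have h2 : (starRingEnd ℂ) (ψ (s, e') * star (ψ (s', e')))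
        = star (ψ (s, e')) * ψ (s', e') := by
      rw [_root_.map_mul]
      simp [Complex.star_def]
    rw [h2, P]
    have h3 : ∀ z : ℂ, star z = (starRingEnd ℂ) z := fun _ => rfl
    rw [h3, h3]
    ring
  calc Complex.normSq (reducedState ψ s s')
      = (reducedState ψ s s' * (starRingEnd ℂ) (reducedState ψ s s')).re := by
        rw [Complex.mul_conj, Complex.ofReal_re]
    _ = _ := by rw [hz]

lemma frobSq_reduced_eq (dS dE : ℕ) (ψ : EuclideanSpace ℂ (Fin dS × Fin dE)) :
    frobSq (reducedState ψ)
      = (∑ t : (Fin dS × Fin dS) × (Fin dE × Fin dE),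
          P (t.1.1, t.2.1) (t.1.2, t.2.1) (t.1.2, t.2.2) (t.1.1, t.2.2) ψ).re := by
  calc frobSq (reducedState ψ)
      = ∑ p : Fin dS × Fin dS, Complex.normSq (reducedState ψ p.1 p.2) := by
        rw [frobSq, Fintype.sum_prod_type]
    _ = ∑ p : Fin dS × Fin dS, (∑ q : Fin dE × Fin dE,
          P (p.1, q.1) (p.2, q.1) (p.2, q.2) (p.1, q.2) ψ).re :=
        Finset.sum_congr rfl fun p _ => normSq_entry_eq dS dE ψ p.1 p.2
    _ = (∑ p : Fin dS × Fin dS, ∑ q : Fin dE × Fin dE,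
          P (p.1, q.1) (p.2, q.1) (p.2, q.2) (p.1, q.2) ψ).re := by
        rw [Complex.re_sum]
    _ = _ := by simp [Fintype.sum_prod_type]


/-! ### Step A: subtracting the scalar matrix -/

lemma trace_reduced (dS dE : ℕ)
    (ψ : Metric.sphere (0 : EuclideanSpace ℂ (Fin dS × Fin dE)) 1) :
    ∑ s : Fin dS, reducedState (ψ.val) s s = 1 := by
  have h1 := norm_sum_eq_one ψ
  rw [Fintype.sum_prod_type] at h1
  calc ∑ s : Fin dS, reducedState (ψ.val) s s
      = ∑ s : Fin dS, ∑ e : Fin dE, ψ.val (s, e) * (starRingEnd ℂ) (ψ.val (s, e)) := rfl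
    _ = 1 := h1

lemma frobSq_sub_smul (dS dE : ℕ) (hdS : 0 < dS)
    (ψ : Metric.sphere (0 : EuclideanSpace ℂ (Fin dS × Fin dE)) 1) :
    frobSq (reducedState (ψ.val) - ((dS : ℂ))⁻¹ • (1 : Matrix (Fin dS) (Fin dS) ℂ))
      = frobSq (reducedState (ψ.val)) - ((dS : ℝ))⁻¹ := by
  set A := reducedState (ψ.val) with hA
  have hdR : (0 : ℝ) < (dS : ℝ) := by exact_mod_cast hdS
  have hcast : ((dS : ℂ))⁻¹ = (((dS : ℝ)⁻¹ : ℝ) : ℂ) := by push_cast; ring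
  have hentry : ∀ s s' : Fin dS,
      Complex.normSq ((A - ((dS : ℂ))⁻¹ • (1 : Matrix (Fin dS) (Fin dS) ℂ)) s s')
        = Complex.normSq (A s s')
          + (if s = s' then ((dS : ℝ)⁻¹) ^ 2 - 2 * (dS : ℝ)⁻¹ * (A s s').re else 0) := by
    intro s s'
    have h1 : (A - ((dS : ℂ))⁻¹ • (1 : Matrix (Fin dS) (Fin dS) ℂ)) s s'
        = A s s' - (dS : ℂ)⁻¹ * (if s = s' then 1 else 0) := by
      simp [Matrix.sub_apply, Matrix.smul_apply, Matrix.one_apply, smul_eq_mul]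
    rw [h1]
    split_ifs with h
    · rw [mul_one, Complex.normSq_sub, hcast]
      simp only [Complex.normSq_ofReal, Complex.conj_ofReal, Complex.mul_re,
        Complex.ofReal_re, Complex.ofReal_im]
      ring
    · rw [mul_zero, sub_zero, add_zero]
  have htr : ∑ s : Fin dS, (A s s).re = 1 := by
    rw [← Complex.re_sum, trace_reduced dS dE ψ, Complex.one_re]
  calc frobSq (A - ((dS : ℂ))⁻¹ • (1 : Matrix (Fin dS) (Fin dS) ℂ))
      = ∑ s : Fin dS, ∑ s' : Fin dS, (Complex.normSq (A s s')
          + (if s = s' then ((dS : ℝ)⁻¹) ^ 2 - 2 * (dS : ℝ)⁻¹ * (A s s').re else 0)) := by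
        rw [frobSq]
        exact Finset.sum_congr rfl fun s _ => Finset.sum_congr rfl fun s' _ => hentry s s'
    _ = frobSq A + ∑ s : Fin dS, ∑ s' : Fin dS,
          (if s = s' then ((dS : ℝ)⁻¹) ^ 2 - 2 * (dS : ℝ)⁻¹ * (A s s').re else 0) := by
        rw [frobSq, ← Finset.sum_add_distrib]
        exact Finset.sum_congr rfl fun s _ => by rw [← Finset.sum_add_distrib]
    _ = frobSq A + ∑ s : Fin dS, (((dS : ℝ)⁻¹) ^ 2 - 2 * (dS : ℝ)⁻¹ * (A s s).re) := by
        congr 1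
        exact Finset.sum_congr rfl fun s _ => by
          rw [Finset.sum_ite_eq Finset.univ s
            (fun s' => ((dS : ℝ)⁻¹) ^ 2 - 2 * (dS : ℝ)⁻¹ * (A s s').re)]
          simp
    _ = frobSq A - (dS : ℝ)⁻¹ := by
        rw [Finset.sum_sub_distrib, Finset.sum_const, ← Finset.mul_sum, htr]
        simp only [Finset.card_univ, Fintype.card_fin, nsmul_eq_mul, mul_one]
        field_simp
        ring

/-! ### Step C: summing the moments -/

lemma sum_ite_fst_count {α β : Type*} [Fintype α] [DecidableEq α] [Fintype β] (A : ℂ) :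
    ∑ t : (α × α) × (β × β), (if t.1.1 = t.1.2 then A else 0)
      = (Fintype.card α : ℂ) * ((Fintype.card β : ℂ) * (Fintype.card β : ℂ)) * A := by
  classical
  rw [Fintype.sum_prod_type]
  have h1 : ∀ p : α × α, ∑ _q : β × β, (if p.1 = p.2 then A else 0)
      = ((Fintype.card β * Fintype.card β : ℕ) : ℂ) * (if p.1 = p.2 then A else 0) := by
    intro p
    rw [Finset.sum_const, Finset.card_univ, Fintype.card_prod, nsmul_eq_mul]
  rw [Finset.sum_congr rfl fun p _ => h1 p, ← Finset.mul_sum, Fintype.sum_prod_type]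
  have h2 : ∀ a : α, ∑ a' : α, (if a = a' then A else 0) = A := by
    intro a
    rw [Finset.sum_ite_eq Finset.univ a (fun _ => A)]
    simp
  rw [Finset.sum_congr rfl fun a _ => h2 a, Finset.sum_const, Finset.card_univ, nsmul_eq_mul]
  push_cast
  ring

lemma sum_ite_snd_count {α β : Type*} [Fintype α] [DecidableEq β] [Fintype β] (A : ℂ) :
    ∑ t : (α × α) × (β × β), (if t.2.1 = t.2.2 then A else 0)
      = ((Fintype.card α : ℂ) * (Fintype.card α : ℂ)) * (Fintype.card β : ℂ) * A := by
  classical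
  rw [Fintype.sum_prod_type]
  have h2 : ∀ b : β, ∑ b' : β, (if b = b' then A else 0) = A := by
    intro b
    rw [Finset.sum_ite_eq Finset.univ b (fun _ => A)]
    simp
  have h1 : ∀ _p : α × α, ∑ q : β × β, (if q.1 = q.2 then A else 0)
      = (Fintype.card β : ℂ) * A := by
    intro p
    rw [Fintype.sum_prod_type, Finset.sum_congr rfl fun b _ => h2 b, Finset.sum_const,
      Finset.card_univ, nsmul_eq_mul]
  rw [Finset.sum_congr rfl fun p _ => h1 p, Finset.sum_const, Finset.card_univ,
    Fintype.card_prod, nsmul_eq_mul]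
  push_cast
  ring

end CanTyp

open CanTyp

/-- Quantitative canonical typicality: the mean squared Hilbert–Schmidt
distance of the reduced state of a uniformly random pure universal state from the reduced
state `(1/dS) • 1` of the normalized projection `W_R` equals
`(dS² − 1)/(dS·(dS·dE + 1))`. -/
theorem mean_squared_HS_distance_canonical_typicality
    (dS dE : ℕ) (hdS : 1 ≤ dS) (hdE : 1 ≤ dE)
    (μ : Measure (Metric.sphere (0 : EuclideanSpace ℂ (Fin dS × Fin dE)) 1))
    (hμ : IsUniformSphereMeasure μ) :
    (∫ ψ : Metric.sphere (0 : EuclideanSpace ℂ (Fin dS × Fin dE)) 1,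
        frobSq (reducedState (ψ : EuclideanSpace ℂ (Fin dS × Fin dE)) -
          ((dS : ℂ))⁻¹ • (1 : Matrix (Fin dS) (Fin dS) ℂ)) ∂μ) =
      ((dS : ℝ) ^ 2 - 1) / ((dS : ℝ) * ((dS : ℝ) * (dE : ℝ) + 1)) := by
  classical
  haveI : IsProbabilityMeasure μ := hμ.1
  have hdS0 : 0 < dS := hdS
  have hdE0 : 0 < dE := hdE
  by_cases hdS1 : dS = 1
  · -- trivial case
    subst hdS1
    have hz : ∀ ψ : Metric.sphere (0 : EuclideanSpace ℂ (Fin 1 × Fin dE)) 1,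
        frobSq (reducedState (ψ : EuclideanSpace ℂ (Fin 1 × Fin dE)) -
          ((1 : ℕ) : ℂ)⁻¹ • (1 : Matrix (Fin 1) (Fin 1) ℂ)) = 0 := by
      intro ψ
      rw [frobSq_sub_smul 1 dE one_pos ψ]
      have h1 : frobSq (reducedState (ψ.val : EuclideanSpace ℂ (Fin 1 × Fin dE))) = 1 := by
        have h2 := trace_reduced 1 dE ψ
        rw [Fin.sum_univ_one] at h2
        rw [frobSq, Fin.sum_univ_one, Fin.sum_univ_one, h2]
        simp
      rw [h1]
      norm_num
    calc ∫ ψ : Metric.sphere (0 : EuclideanSpace ℂ (Fin 1 × Fin dE)) 1,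
          frobSq (reducedState (ψ : EuclideanSpace ℂ (Fin 1 × Fin dE)) -
            ((1 : ℕ) : ℂ)⁻¹ • (1 : Matrix (Fin 1) (Fin 1) ℂ)) ∂μ
        = ∫ _ψ : Metric.sphere (0 : EuclideanSpace ℂ (Fin 1 × Fin dE)) 1, (0 : ℝ) ∂μ :=
          integral_congr_ae (Filter.Eventually.of_forall hz)
      _ = 0 := integral_zero _ _
      _ = ((1 : ℕ) : ℝ) ^ 2 * 1 - 1 := by norm_num
      _ = (((1 : ℕ) : ℝ) ^ 2 - 1) / (((1 : ℕ) : ℝ) * (((1 : ℕ) : ℝ) * (dE : ℝ) + 1)) := by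
          norm_num
  · -- main case : dS ≥ 2
    have hdS2 : 2 ≤ dS := by omega
    set ι := Fin dS × Fin dE
    have hcard : (Fintype.card ι : ℂ) = (dS : ℂ) * (dE : ℂ) := by
      have h0 : Fintype.card ι = dS * dE := by simp [ι]
      rw [h0]
      push_cast
      ring
    set a : ι := (⟨0, by omega⟩, ⟨0, by omega⟩) with ha
    set b : ι := (⟨1, by omega⟩, ⟨0, by omega⟩) with hb
    have hab : a ≠ b := by
      intro h
      have h1 := congrArg (fun p : ι => (p.1 : ℕ)) h
      simp [ha, hb] at h1
    set c : ℂ := 2 / ((Fintype.card ι : ℂ) * ((Fintype.card ι : ℂ) + 1)) with hcdef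
    have hdiag : ∀ i : ι, Mom μ i i i i = c := by
      intro i
      by_cases h : i = a
      · rw [h]; exact Mom_diag_value hμ hab
      · rw [Mom_diag_eq hμ h]; exact Mom_diag_value hμ hab
    have hoff : ∀ i j : ι, i ≠ j → Mom μ i i j j = 2⁻¹ * c := by
      intro i j h
      rw [← Mom_iijj_comm, Mom_abba hμ h, hdiag i]
    have hoff' : ∀ i j : ι, i ≠ j → Mom μ i j j i = 2⁻¹ * c := by
      intro i j h
      rw [Mom_abba hμ h, hdiag i]
    -- value of each moment appearing in the Frobenius-norm expansion
    have hterm : ∀ t : (Fin dS × Fin dS) × (Fin dE × Fin dE),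
        Mom μ (t.1.1, t.2.1) (t.1.2, t.2.1) (t.1.2, t.2.2) (t.1.1, t.2.2)
          = (if t.1.1 = t.1.2 then 2⁻¹ * c else 0)
            + (if t.2.1 = t.2.2 then 2⁻¹ * c else 0) := by
      rintro ⟨⟨s, s'⟩, e, e'⟩
      show Mom μ (s, e) (s', e) (s', e') (s, e')
        = (if s = s' then 2⁻¹ * c else 0) + (if e = e' then 2⁻¹ * c else 0)
      by_cases hs : s = s' <;> by_cases he : e = e'
      · subst hs; subst he
        rw [if_pos rfl, if_pos rfl, hdiag (s, e)]
        ring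
      · subst hs
        rw [if_pos rfl, if_neg he, hoff (s, e) (s, e') (fun h => he (congrArg Prod.snd h))]
        ring
      · subst he
        rw [if_neg hs, if_pos rfl, hoff' (s, e) (s', e) (fun h => hs (congrArg Prod.fst h))]
        ring
      · rw [if_neg hs, if_neg he,
          Mom_vanish hμ (s, e) (by simp [Prod.ext_iff, hs, he, Ne.symm hs, Ne.symm he])]
        ring
    -- sum of all the moments
    have hsum : ∑ t : (Fin dS × Fin dS) × (Fin dE × Fin dE),
        Mom μ (t.1.1, t.2.1) (t.1.2, t.2.1) (t.1.2, t.2.2) (t.1.1, t.2.2)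
          = ((((dS : ℝ) + (dE : ℝ)) / ((dS : ℝ) * (dE : ℝ) + 1) : ℝ) : ℂ) := by
      rw [Finset.sum_congr rfl fun t _ => hterm t, Finset.sum_add_distrib,
        sum_ite_fst_count (2⁻¹ * c), sum_ite_snd_count (2⁻¹ * c), hcdef, hcard]
      simp only [Fintype.card_fin]
      have hS : (dS : ℂ) ≠ 0 := Nat.cast_ne_zero.mpr (by omega)
      have hE : (dE : ℂ) ≠ 0 := Nat.cast_ne_zero.mpr (by omega)
      have hSE1 : (dS : ℂ) * (dE : ℂ) + 1 ≠ 0 := by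
        have : ((dS * dE + 1 : ℕ) : ℂ) ≠ 0 := Nat.cast_ne_zero.mpr (by omega)
        push_cast at this
        exact this
      have hSE1' : ((dS : ℝ) * (dE : ℝ) + 1) ≠ 0 := by positivity
      push_cast
      field_simp
      ring
    -- Step D : assemble everything
    have hG : Integrable (fun ψ : Metric.sphere (0 : EuclideanSpace ℂ (Fin dS × Fin dE)) 1 =>
        ∑ t : (Fin dS × Fin dS) × (Fin dE × Fin dE),
          P (t.1.1, t.2.1) (t.1.2, t.2.1) (t.1.2, t.2.2) (t.1.1, t.2.2) (ψ.val)) μ :=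
      integrable_finset_sum _ (fun t _ => integrable_P _ _ _ _)
    have hfrob_eq : (fun ψ : Metric.sphere (0 : EuclideanSpace ℂ (Fin dS × Fin dE)) 1 =>
        frobSq (reducedState (ψ.val)))
        = fun ψ : Metric.sphere (0 : EuclideanSpace ℂ (Fin dS × Fin dE)) 1 =>
          (∑ t : (Fin dS × Fin dS) × (Fin dE × Fin dE),
            P (t.1.1, t.2.1) (t.1.2, t.2.1) (t.1.2, t.2.2) (t.1.1, t.2.2) (ψ.val)).re :=
      funext fun ψ => frobSq_reduced_eq dS dE ψ.val
    have hfrob_int : Integrable (fun ψ : Metric.sphere (0 : EuclideanSpace ℂ (Fin dS × Fin dE)) 1 =>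
        frobSq (reducedState (ψ.val))) μ := by
      rw [hfrob_eq]
      exact hG.re
    have hmean : ∫ ψ : Metric.sphere (0 : EuclideanSpace ℂ (Fin dS × Fin dE)) 1,
        frobSq (reducedState (ψ.val)) ∂μ
        = ((dS : ℝ) + (dE : ℝ)) / ((dS : ℝ) * (dE : ℝ) + 1) := by
      rw [hfrob_eq]
      have h1 : ∫ ψ : Metric.sphere (0 : EuclideanSpace ℂ (Fin dS × Fin dE)) 1,
          (∑ t : (Fin dS × Fin dS) × (Fin dE × Fin dE),
            P (t.1.1, t.2.1) (t.1.2, t.2.1) (t.1.2, t.2.2) (t.1.1, t.2.2) (ψ.val)).re ∂μ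
          = (∫ ψ : Metric.sphere (0 : EuclideanSpace ℂ (Fin dS × Fin dE)) 1,
            ∑ t : (Fin dS × Fin dS) × (Fin dE × Fin dE),
              P (t.1.1, t.2.1) (t.1.2, t.2.1) (t.1.2, t.2.2) (t.1.1, t.2.2) (ψ.val) ∂μ).re := by
        simp_rw [← RCLike.re_to_complex]
        exact integral_re hG
      rw [h1, integral_finset_sum _ (fun t _ => integrable_P _ _ _ _)]
      have h2 : ∑ t : (Fin dS × Fin dS) × (Fin dE × Fin dE),
          ∫ ψ : Metric.sphere (0 : EuclideanSpace ℂ (Fin dS × Fin dE)) 1,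
            P (t.1.1, t.2.1) (t.1.2, t.2.1) (t.1.2, t.2.2) (t.1.1, t.2.2) (ψ.val) ∂μ
          = ∑ t : (Fin dS × Fin dS) × (Fin dE × Fin dE),
            Mom μ (t.1.1, t.2.1) (t.1.2, t.2.1) (t.1.2, t.2.2) (t.1.1, t.2.2) := rfl
      rw [h2, hsum, Complex.ofReal_re]
    calc ∫ ψ : Metric.sphere (0 : EuclideanSpace ℂ (Fin dS × Fin dE)) 1,
          frobSq (reducedState (ψ : EuclideanSpace ℂ (Fin dS × Fin dE)) -
            ((dS : ℂ))⁻¹ • (1 : Matrix (Fin dS) (Fin dS) ℂ)) ∂μ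
        = ∫ ψ : Metric.sphere (0 : EuclideanSpace ℂ (Fin dS × Fin dE)) 1,
            (frobSq (reducedState (ψ.val)) - ((dS : ℝ))⁻¹) ∂μ :=
          integral_congr_ae (Filter.Eventually.of_forall fun ψ => frobSq_sub_smul dS dE hdS0 ψ)
      _ = (∫ ψ : Metric.sphere (0 : EuclideanSpace ℂ (Fin dS × Fin dE)) 1,
            frobSq (reducedState (ψ.val)) ∂μ) - ((dS : ℝ))⁻¹ := by
          rw [integral_sub hfrob_int (integrable_const _), integral_const]
          simp [measure_univ]
      _ = ((dS : ℝ) + (dE : ℝ)) / ((dS : ℝ) * (dE : ℝ) + 1) - ((dS : ℝ))⁻¹ := by rw [hmean]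
      _ = ((dS : ℝ) ^ 2 - 1) / ((dS : ℝ) * ((dS : ℝ) * (dE : ℝ) + 1)) := by
          have hS : (dS : ℝ) ≠ 0 := by positivity
          have hSE1 : ((dS : ℝ) * (dE : ℝ) + 1) ≠ 0 := by positivity
          field_simp
          ring
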